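/- For every m ≥ 1 and every k with 0 ≤ k ≤ m−1, the number of Dyck paths of semilength m in which every up step is a flaw (m flaws) with exactly k peaks satisfies (k+1)·p_{m,m,k} = C(m−1,k)·C(m,k), where C(a,b) denotes the binomial coefficient; equivalently, P_{m,m}(x) = Σ_{k=1}^{m} (1/k)·C(m−1,k−1)·C(m,k−1)·x^{k−1}, where P_{m,m}(x) = Σ_{k≥0} p_{m,m,k} x^k. -/

import Mathlib

/-- The height of a path (list of steps; `true` = up step `U`, `false` = down step `D`)
after all its steps: #U − #D. -/
def height (l : List Bool) : ℤ := (l.count true : ℤ) - (l.count false : ℤ)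

/-- `l` is a Dyck path of semilength `n`: `2n` steps ending at height `0`
(equivalently, exactly `n` up steps). It may go below the x-axis. -/
def IsDyck (n : ℕ) (l : List Bool) : Prop := l.length = 2 * n ∧ l.count true = n

/-- The number of flaws: up steps starting at negative height. -/
def flaws (l : List Bool) : ℕ :=
  ((Finset.range l.length).filter
    (fun i => l.getD i false = true ∧ height (l.take i) < 0)).card

/-- The number of peaks: positions where an up step is immediately followed by a down step. -/
def peaks (l : List Bool) : ℕ :=
  ((Finset.range (l.length - 1)).filter
    (fun i => l.getD i false = true ∧ l.getD (i + 1) false = false)).card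

/-- The number of valleys: positions where a down step is immediately followed by an up step. -/
def valleys (l : List Bool) : ℕ :=
  ((Finset.range (l.length - 1)).filter
    (fun i => l.getD i false = false ∧ l.getD (i + 1) false = true)).card

/-- The number of double ascents: positions of two consecutive up steps. -/
def dascents (l : List Bool) : ℕ :=
  ((Finset.range (l.length - 1)).filter
    (fun i => l.getD i false = true ∧ l.getD (i + 1) false = true)).card

/-- The number of double descents: positions of two consecutive down steps. -/
def ddescents (l : List Bool) : ℕ :=
  ((Finset.range (l.length - 1)).filter
    (fun i => l.getD i false = false ∧ l.getD (i + 1) false = false)).card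

/-- `p n m k`: the number of Dyck paths of semilength `n` with `m` flaws and `k` peaks. -/
noncomputable def p (n m k : ℕ) : ℕ :=
  Nat.card {l : List Bool // IsDyck n l ∧ flaws l = m ∧ peaks l = k}

/-- `v n m k`: the number of Dyck paths of semilength `n` with `m` flaws and `k` valleys. -/
noncomputable def v (n m k : ℕ) : ℕ :=
  Nat.card {l : List Bool // IsDyck n l ∧ flaws l = m ∧ valleys l = k}

/-- `a n m k`: the number of Dyck paths of semilength `n` with `m` flaws and `k` double ascents. -/
noncomputable def a (n m k : ℕ) : ℕ :=
  Nat.card {l : List Bool // IsDyck n l ∧ flaws l = m ∧ dascents l = k}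

/-- `d n m k`: the number of Dyck paths of semilength `n` with `m` flaws and `k` double descents. -/
noncomputable def d (n m k : ℕ) : ℕ :=
  Nat.card {l : List Bool // IsDyck n l ∧ flaws l = m ∧ ddescents l = k}

/-!
A path all of whose up steps are flaws is exactly one that never rises above the axis. For
`m ≥ 1` such a path is `D^{a₁} U^{b₁} ⋯ D^{aₜ} U^{bₜ}` for two compositions `a`, `b` of `m` into
`t` parts whose partial sums satisfy `b₁ + ⋯ + bᵢ ≤ a₁ + ⋯ + aᵢ`, and it has `t - 1` peaks.

To count these pairs, allow `a` to have `d` extra parts and compare `b₁ + ⋯ + bᵢ` with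
`a₁ + ⋯ + a_{i+d}`. Taking one unit off the first part of each composition (deleting a part equal
to `1`) gives a four-term recursion in `m`. By Pascal's rule the Lindström–Gessel–Viennot
determinant `C(m-1, t+d-1) C(m-1, t-1) - C(m-1, t+d) C(m-1, t-2)` satisfies the same recursion.
For `t = k + 1` and `d = 0`, multiplying it by `k + 1` gives `C(m-1, k) C(m, k)`.
-/

theorem height_nil : height [] = 0 := rfl

theorem height_cons (c : Bool) (l : List Bool) :
    height (c :: l) = height l + if c then 1 else -1 := by
  cases c <;> simp [height] <;> ring

theorem height_append (u v : List Bool) : height (u ++ v) = height u + height v := by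
  simp only [height, List.count_append]; push_cast; ring

theorem height_replicate (n : ℕ) (c : Bool) :
    height (List.replicate n c) = if c then (n : ℤ) else -n := by
  cases c <;> simp [height, List.count_replicate]

theorem height_take_add_one {l : List Bool} {i : ℕ} (hi : i < l.length) :
    height (l.take (i + 1)) = height (l.take i) + if l.getD i false then 1 else -1 := by
  rw [List.take_add_one, List.getElem?_eq_getElem hi, List.getD_eq_getElem _ _ hi,
    height_append]
  simp [height_cons, height_nil]

def StaysBelow (e : ℤ) (l : List Bool) : Prop := ∀ j, height (l.take j) ≤ e

theorem staysBelow_append {e : ℤ} {u v : List Bool} :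
    StaysBelow e (u ++ v) ↔ StaysBelow e u ∧ StaysBelow (e - height u) v := by
  refine ⟨fun h => ⟨fun j => ?_, fun j => ?_⟩, fun ⟨hu, hv⟩ j => ?_⟩
  · rcases le_total j u.length with hj | hj
    · simpa [List.take_append_of_le_length hj] using h j
    · simpa [List.take_of_length_le hj] using h u.length
  · have := h (u.length + j)
    rw [List.take_length_add_append, height_append] at this
    linarith
  · rw [List.take_append, height_append]
    rcases le_total j u.length with hj | hj
    · simpa [Nat.sub_eq_zero_of_le hj, height_nil] using hu j
    · rw [List.take_of_length_le hj]
      linarith [hv (j - u.length)]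

theorem staysBelow_replicate_false {e : ℤ} {n : ℕ} :
    StaysBelow e (List.replicate n false) ↔ 0 ≤ e := by
  refine ⟨fun h => by simpa [height_nil] using h 0, fun he j => ?_⟩
  rw [List.take_replicate, height_replicate]
  simp only [Bool.false_eq_true, ↓reduceIte]
  omega

theorem staysBelow_replicate_true {e : ℤ} {n : ℕ} :
    StaysBelow e (List.replicate n true) ↔ n ≤ e := by
  refine ⟨fun h => by simpa [height_replicate] using h n, fun he j => ?_⟩
  rw [List.take_replicate, height_replicate]
  simp only [↓reduceIte]
  omega

theorem StaysBelow.head?_ne_some_true {l : List Bool} (hl : StaysBelow 0 l) :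
    l.head? ≠ some true := by
  intro h
  obtain ⟨l, rfl⟩ := List.head?_eq_some_iff.mp h
  have := hl 1
  simp [height_cons, height_nil] at this

theorem StaysBelow.getLast?_ne_some_false {e : ℤ} {l : List Bool} (hl : StaysBelow e l)
    (he : height l = e) : l.getLast? ≠ some false := by
  intro h
  obtain ⟨l, rfl⟩ := List.getLast?_eq_some_iff.mp h
  have := hl l.length
  rw [List.take_left' rfl] at this
  rw [height_append, height_cons, height_nil] at he
  simp only [Bool.false_eq_true, ↓reduceIte, zero_add] at he
  linarith

theorem count_true_eq_card_filter (l : List Bool) :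
    l.count true = ((Finset.range l.length).filter (fun i => l.getD i false = true)).card := by
  induction l with
  | nil => simp
  | cons c l ih =>
    rw [List.length_cons, Finset.card_filter, Finset.sum_range_succ', ← Finset.card_filter]
    cases c <;> simp [ih]

theorem flaws_eq_count_true_iff {l : List Bool} :
    flaws l = l.count true ↔ StaysBelow 0 l := by
  rw [flaws, count_true_eq_card_filter, ← Finset.filter_filter, Finset.card_filter_eq_iff]
  simp only [Finset.mem_filter, Finset.mem_range, and_imp]
  constructor
  · intro h j
    induction j with
    | zero => simp [height_nil]
    | succ j ih =>
      rcases lt_or_ge j l.length with hj | hj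
      · rw [height_take_add_one hj]
        cases hc : l.getD j false
        · simp only [Bool.false_eq_true, ↓reduceIte]; omega
        · simp only [↓reduceIte]; linarith [h j hj hc]
      · rwa [List.take_of_length_le (by omega), ← List.take_of_length_le hj]
  · intro h i hi hc
    have := h (i + 1)
    rw [height_take_add_one hi, hc] at this
    simp only [↓reduceIte] at this
    linarith

theorem peaks_cons (c : Bool) (l : List Bool) :
    peaks (c :: l) = peaks l + if c = true ∧ l.head? = some false then 1 else 0 := by
  rcases l with _ | ⟨c', l⟩
  · simp [peaks]
  · simp only [peaks, List.length_cons, Nat.add_sub_cancel, Finset.card_filter]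
    rw [Finset.sum_range_succ']
    simp

theorem peaks_replicate_false_append (n : ℕ) (l : List Bool) :
    peaks (List.replicate n false ++ l) = peaks l := by
  induction n with
  | zero => rfl
  | succ n ih => simp [List.replicate_succ, peaks_cons, ih]

theorem peaks_replicate_true_append (n : ℕ) (l : List Bool) :
    peaks (List.replicate (n + 1) true ++ l) = peaks l + if l.head? = some false then 1 else 0 := by
  induction n with
  | zero => simp [peaks_cons]
  | succ n ih =>
    rw [List.replicate_succ, List.cons_append, peaks_cons, ih]
    simp [List.replicate_succ]

def ofRuns : List ℕ → List ℕ → List Bool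
  | x :: a, y :: b => List.replicate x false ++ (List.replicate y true ++ ofRuns a b)
  | _, _ => []

@[simp] theorem ofRuns_nil_left (b : List ℕ) : ofRuns [] b = [] := rfl

@[simp] theorem ofRuns_nil_right (a : List ℕ) : ofRuns a [] = [] := by cases a <;> rfl

@[simp] theorem ofRuns_cons_cons (x y : ℕ) (a b : List ℕ) :
    ofRuns (x :: a) (y :: b) = List.replicate x false ++ (List.replicate y true ++ ofRuns a b) :=
  rfl

theorem count_ofRuns (c : Bool) {a b : List ℕ} (hab : a.length = b.length) :
    (ofRuns a b).count c = if c then b.sum else a.sum := by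
  induction a generalizing b with
  | nil => cases b <;> simp_all
  | cons x a ih =>
    cases b with
    | nil => simp at hab
    | cons y b =>
      simp only [List.length_cons, Nat.add_right_cancel_iff] at hab
      cases c <;> simp [List.count_replicate, ih hab]

theorem head?_ofRuns_cons_cons {x : ℕ} (hx : x ≠ 0) (y : ℕ) (a b : List ℕ) :
    (ofRuns (x :: a) (y :: b)).head? = some false := by
  obtain ⟨x, rfl⟩ := Nat.exists_eq_succ_of_ne_zero hx
  simp [List.replicate_succ]

theorem peaks_ofRuns {a b : List ℕ} (ha : 0 ∉ a) (hb : 0 ∉ b) (hab : a.length = b.length) :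
    peaks (ofRuns a b) = a.length - 1 := by
  induction a generalizing b with
  | nil => simp [peaks]
  | cons x a ih =>
    obtain _ | ⟨y, b⟩ := b
    · simp at hab
    simp only [List.mem_cons, not_or] at ha hb
    obtain ⟨y, rfl⟩ := Nat.exists_eq_succ_of_ne_zero (Ne.symm hb.1)
    simp only [List.length_cons, Nat.add_right_cancel_iff] at hab
    rw [ofRuns_cons_cons, peaks_replicate_false_append, peaks_replicate_true_append,
      ih ha.2 hb.2 hab]
    obtain _ | ⟨x', a⟩ := a
    · simp
    obtain _ | ⟨y', b⟩ := b
    · simp at hab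
    rw [head?_ofRuns_cons_cons (List.ne_of_not_mem_cons ha.2).symm]
    simp

theorem staysBelow_ofRuns_iff {e : ℤ} {a b : List ℕ} (hab : a.length = b.length) :
    StaysBelow e (ofRuns a b) ↔ ∀ i, ((b.take i).sum : ℤ) ≤ e + (a.take i).sum := by
  induction a generalizing b e with
  | nil =>
    cases b with
    | nil => simp [StaysBelow, height_nil]
    | cons => simp at hab
  | cons x a ih =>
    cases b with
    | nil => simp at hab
    | cons y b =>
      simp only [List.length_cons, Nat.add_right_cancel_iff] at hab
      rw [ofRuns_cons_cons, staysBelow_append, staysBelow_append, staysBelow_replicate_false,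
        staysBelow_replicate_true, ih hab, height_replicate, height_replicate]
      conv_rhs => rw [← Nat.and_forall_add_one]
      simp only [List.take_zero, List.sum_nil, List.take_succ_cons, List.sum_cons]
      simp only [Bool.false_eq_true, ↓reduceIte, Nat.cast_add, Nat.cast_zero, add_zero]
      constructor
      · rintro ⟨he, -, h⟩
        exact ⟨he, fun i => by linarith [h i]⟩
      · rintro ⟨he, h⟩
        exact ⟨he, by simpa using h 0, fun i => by linarith [h i]⟩

theorem replicate_append_inj {c : Bool} {m n : ℕ} {l l' : List Bool}
    (hl : l.head? ≠ some c) (hl' : l'.head? ≠ some c)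
    (h : List.replicate m c ++ l = List.replicate n c ++ l') : m = n ∧ l = l' := by
  induction m generalizing n with
  | zero =>
    cases n with
    | zero => simpa using h
    | succ n => simp [List.replicate_succ] at h; simp [h] at hl
  | succ m ih =>
    cases n with
    | zero => simp [List.replicate_succ] at h; simp [← h] at hl'
    | succ n =>
      simp only [List.replicate_succ, List.cons_append, List.cons.injEq, true_and] at h
      simpa using ih h

theorem head?_ofRuns_ne_some_true {a : List ℕ} (ha : 0 ∉ a) (b : List ℕ) :
    (ofRuns a b).head? ≠ some true := by
  obtain _ | ⟨x, a⟩ := a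
  · simp
  obtain _ | ⟨y, b⟩ := b
  · simp
  rw [head?_ofRuns_cons_cons (List.ne_of_not_mem_cons ha).symm]
  simp

theorem ofRuns_inj {a b a' b' : List ℕ} (ha : 0 ∉ a) (hb : 0 ∉ b) (ha' : 0 ∉ a') (hb' : 0 ∉ b')
    (hab : a.length = b.length) (hab' : a'.length = b'.length)
    (h : ofRuns a b = ofRuns a' b') : a = a' ∧ b = b' := by
  induction a generalizing b a' b' with
  | nil =>
    obtain _ | ⟨x', a'⟩ := a'
    · simp only [List.length_nil] at hab hab'
      simp [List.length_eq_zero_iff.mp hab.symm, List.length_eq_zero_iff.mp hab'.symm]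
    obtain _ | ⟨y', b'⟩ := b'
    · simp at hab'
    have := head?_ofRuns_cons_cons (List.ne_of_not_mem_cons ha').symm y' a' b'
    simp_all
  | cons x a ih =>
    obtain _ | ⟨y, b⟩ := b
    · simp at hab
    obtain _ | ⟨x', a'⟩ := a'
    · have := head?_ofRuns_cons_cons (List.ne_of_not_mem_cons ha).symm y a b
      simp_all
    obtain _ | ⟨y', b'⟩ := b'
    · simp at hab'
    simp only [List.length_cons, Nat.add_right_cancel_iff, ofRuns_cons_cons] at hab hab' h
    obtain ⟨rfl, hdown⟩ := replicate_append_inj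
      (by simp [List.head?_replicate, (List.ne_of_not_mem_cons hb).symm])
      (by simp [List.head?_replicate, (List.ne_of_not_mem_cons hb').symm]) h
    obtain ⟨rfl, hup⟩ := replicate_append_inj
      (head?_ofRuns_ne_some_true (List.not_mem_of_not_mem_cons ha) b)
      (head?_ofRuns_ne_some_true (List.not_mem_of_not_mem_cons ha') b') hdown
    obtain ⟨rfl, rfl⟩ := ih (List.not_mem_of_not_mem_cons ha) (List.not_mem_of_not_mem_cons hb)
      (List.not_mem_of_not_mem_cons ha') (List.not_mem_of_not_mem_cons hb') hab hab' hup
    simp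

theorem exists_eq_replicate_append_ofRuns {l : List Bool} (hl : l.getLast? ≠ some false) :
    ∃ y a b, 0 ∉ a ∧ 0 ∉ b ∧ a.length = b.length ∧ l = List.replicate y true ++ ofRuns a b := by
  induction l with
  | nil => exact ⟨0, [], [], by simp⟩
  | cons c l ih =>
    have hl' : l.getLast? ≠ some false := fun h => hl (by rw [List.getLast?_cons, h]; rfl)
    obtain ⟨y, a, b, ha, hb, hab, rfl⟩ := ih hl'
    cases c
    · cases y with
      | succ y => exact ⟨0, 1 :: a, (y + 1) :: b, by simp [ha], by simp [hb], by simp [hab], rfl⟩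
      | zero =>
        obtain _ | ⟨x, a⟩ := a
        · simp at hl
        obtain _ | ⟨y, b⟩ := b
        · simp at hab
        refine ⟨0, (x + 1) :: a, y :: b, ?_, hb, hab, rfl⟩
        simpa using List.not_mem_of_not_mem_cons ha
    · exact ⟨y + 1, a, b, ha, hb, hab, rfl⟩

theorem exists_eq_ofRuns_of_staysBelow {l : List Bool} (hl : StaysBelow 0 l)
    (h0 : height l = 0) : ∃ a b, 0 ∉ a ∧ 0 ∉ b ∧ a.length = b.length ∧ l = ofRuns a b := by
  obtain ⟨y, a, b, ha, hb, hab, rfl⟩ :=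
    exists_eq_replicate_append_ofRuns (hl.getLast?_ne_some_false h0)
  obtain _ | y := y
  · exact ⟨a, b, ha, hb, hab, rfl⟩
  exact absurd (by simp [List.replicate_succ]) hl.head?_ne_some_true

theorem List.modifyHead_injective {α : Type*} {f : α → α} (hf : Function.Injective f) :
    Function.Injective (List.modifyHead f) := by
  rintro (_ | ⟨x, l⟩) (_ | ⟨y, l'⟩) h <;> simp_all [hf.eq_iff]

def ballotPairs (m t d : ℕ) : Set (List ℕ × List ℕ) :=
  {q | q.1.length = t + d ∧ q.2.length = t ∧ 0 ∉ q.1 ∧ 0 ∉ q.2 ∧ q.1.sum = m ∧ q.2.sum = m ∧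
    ∀ i, (q.2.take i).sum ≤ (q.1.take (i + d)).sum}

namespace ballotPairs

theorem finite (m t d : ℕ) : (ballotPairs m t d).Finite := by
  refine (Set.finite_range fun c : Composition m × Composition m =>
    (c.1.blocks, c.2.blocks)).subset ?_
  rintro ⟨a, b⟩ ⟨-, -, ha, hb, hsa, hsb, -⟩
  exact ⟨(⟨a, fun h => Nat.pos_of_ne_zero (by rintro rfl; exact ha h), hsa⟩,
    ⟨b, fun h => Nat.pos_of_ne_zero (by rintro rfl; exact hb h), hsb⟩), rfl⟩

theorem forall_sum_take_cons_le_iff (x y d : ℕ) (a b : List ℕ) :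
    (∀ i, ((y :: b).take i).sum ≤ ((x :: a).take (i + d)).sum) ↔
      ∀ i, y + (b.take i).sum ≤ x + (a.take (i + d)).sum := by
  rw [← Nat.and_forall_add_one]
  simp [Nat.add_right_comm _ 1 d]

theorem cons_add_two_cons_add_two_mem_iff {m t d x y : ℕ} {a b : List ℕ} :
    ((x + 2) :: a, (y + 2) :: b) ∈ ballotPairs (m + 1) (t + 1) d ↔
      ((x + 1) :: a, (y + 1) :: b) ∈ ballotPairs m (t + 1) d := by
  simp only [ballotPairs, Set.mem_ofPred_eq, forall_sum_take_cons_le_iff, List.length_cons,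
    List.sum_cons, List.mem_cons, not_or]
  grind

theorem cons_one_cons_one_mem_iff {m t d : ℕ} {a b : List ℕ} :
    (1 :: a, 1 :: b) ∈ ballotPairs (m + 1) (t + 1) d ↔ (a, b) ∈ ballotPairs m t d := by
  simp only [ballotPairs, Set.mem_ofPred_eq, forall_sum_take_cons_le_iff, List.length_cons,
    List.sum_cons, List.mem_cons, not_or]
  grind

theorem cons_add_two_cons_one_mem_iff {m t d x : ℕ} {a b : List ℕ} :
    ((x + 2) :: a, 1 :: b) ∈ ballotPairs (m + 1) (t + 1) d ↔
      ((x + 1) :: a, b) ∈ ballotPairs m t (d + 1) := by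
  simp only [ballotPairs, Set.mem_ofPred_eq, forall_sum_take_cons_le_iff, List.length_cons,
    List.sum_cons, List.mem_cons, not_or, ← Nat.add_assoc, List.take_succ_cons]
  grind

theorem cons_one_cons_add_two_mem_iff {m t d y : ℕ} {a b : List ℕ} :
    (1 :: a, (y + 2) :: b) ∈ ballotPairs (m + 1) (t + 1) (d + 1) ↔
      (a, (y + 1) :: b) ∈ ballotPairs m (t + 1) d := by
  simp only [ballotPairs, Set.mem_ofPred_eq, forall_sum_take_cons_le_iff, List.length_cons,
    List.sum_cons, List.mem_cons, not_or]
  conv_rhs => rw [← Nat.and_forall_add_one]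
  simp only [List.take_succ_cons, List.sum_cons, List.take_zero, List.sum_nil, zero_le, true_and,
    ← Nat.add_assoc, Nat.add_right_comm _ 1 d]
  grind

theorem cons_one_cons_add_two_notMem {m t y : ℕ} {a b : List ℕ} :
    (1 :: a, (y + 2) :: b) ∉ ballotPairs (m + 1) (t + 1) 0 := by
  intro h
  have := h.2.2.2.2.2.2 1
  simp at this

theorem exists_eq_succ_cons {m t d : ℕ} {a b : List ℕ} (h : (a, b) ∈ ballotPairs m t d)
    (ht : t + d ≠ 0) : ∃ x a', a = (x + 1) :: a' := by
  obtain ⟨hl, -, ha, -⟩ := h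
  obtain _ | ⟨x, a⟩ := a
  · simp only [List.length_nil] at hl; omega
  obtain ⟨x, rfl⟩ := Nat.exists_eq_succ_of_ne_zero (List.ne_of_not_mem_cons ha).symm
  exact ⟨x, a, rfl⟩

theorem exists_eq_cons_succ_cons_succ {m t d : ℕ} {a b : List ℕ}
    (h : (a, b) ∈ ballotPairs m (t + 1) d) :
    ∃ x a' y b', a = (x + 1) :: a' ∧ b = (y + 1) :: b' := by
  obtain ⟨x, a, rfl⟩ := exists_eq_succ_cons h (by omega)
  obtain ⟨-, hl, -, hb, -⟩ := h
  obtain _ | ⟨y, b⟩ := b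
  · simp at hl
  obtain ⟨y, rfl⟩ := Nat.exists_eq_succ_of_ne_zero (List.ne_of_not_mem_cons hb).symm
  exact ⟨x, a, y, b, rfl, rfl⟩

theorem image_cons_one_cons_one (m t d : ℕ) :
    (fun q => (1 :: q.1, 1 :: q.2)) '' ballotPairs m t d =
      ballotPairs (m + 1) (t + 1) d ∩ {q | q.1.head? = some 1} ∩ {q | q.2.head? = some 1} := by
  ext q
  constructor
  · rintro ⟨⟨a, b⟩, h, rfl⟩
    exact ⟨⟨cons_one_cons_one_mem_iff.mpr h, rfl⟩, rfl⟩
  · obtain ⟨a, b⟩ := q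
    rintro ⟨⟨hq, h₁⟩, h₂⟩
    obtain ⟨x, a, y, b, rfl, rfl⟩ := exists_eq_cons_succ_cons_succ hq
    simp only [Set.mem_ofPred_eq, List.head?_cons, Option.some.injEq, Nat.add_eq_right] at h₁ h₂
    subst h₁ h₂
    exact ⟨(a, b), cons_one_cons_one_mem_iff.mp hq, rfl⟩

theorem image_cons_one_modifyHead (m t d : ℕ) :
    (fun q => (1 :: q.1, q.2.modifyHead (· + 1))) '' ballotPairs m (t + 1) d =
      (ballotPairs (m + 1) (t + 1) (d + 1) ∩ {q | q.1.head? = some 1}) \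
        {q | q.2.head? = some 1} := by
  ext q
  constructor
  · rintro ⟨⟨a, b⟩, h, rfl⟩
    obtain ⟨x, a, y, b, rfl, rfl⟩ := exists_eq_cons_succ_cons_succ h
    exact ⟨⟨cons_one_cons_add_two_mem_iff.mpr h, rfl⟩, by simp⟩
  · obtain ⟨a, b⟩ := q
    rintro ⟨⟨hq, h₁⟩, h₂⟩
    obtain ⟨x, a, y, b, rfl, rfl⟩ := exists_eq_cons_succ_cons_succ hq
    simp only [Set.mem_ofPred_eq, List.head?_cons, Option.some.injEq, Nat.add_eq_right] at h₁ h₂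
    subst h₁
    obtain ⟨y, rfl⟩ := Nat.exists_eq_succ_of_ne_zero h₂
    exact ⟨(a, (y + 1) :: b), cons_one_cons_add_two_mem_iff.mp hq, rfl⟩

theorem succ_succ_zero_inter_sdiff_eq_empty (m t : ℕ) :
    (ballotPairs (m + 1) (t + 1) 0 ∩ {q | q.1.head? = some 1}) \ {q | q.2.head? = some 1} = ∅ := by
  refine Set.eq_empty_of_forall_notMem fun ⟨a, b⟩ ⟨⟨hq, h₁⟩, h₂⟩ => ?_
  obtain ⟨x, a, y, b, rfl, rfl⟩ := exists_eq_cons_succ_cons_succ hq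
  simp only [Set.mem_ofPred_eq, List.head?_cons, Option.some.injEq, Nat.add_eq_right] at h₁ h₂
  subst h₁
  obtain ⟨y, rfl⟩ := Nat.exists_eq_succ_of_ne_zero h₂
  exact cons_one_cons_add_two_notMem hq

theorem image_modifyHead_cons_one (m t d : ℕ) :
    (fun q => (q.1.modifyHead (· + 1), 1 :: q.2)) '' ballotPairs m t (d + 1) =
      (ballotPairs (m + 1) (t + 1) d \ {q | q.1.head? = some 1}) ∩ {q | q.2.head? = some 1} := by
  ext q
  constructor
  · rintro ⟨⟨a, b⟩, h, rfl⟩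
    obtain ⟨x, a, rfl⟩ := exists_eq_succ_cons h (by omega)
    exact ⟨⟨cons_add_two_cons_one_mem_iff.mpr h, by simp⟩, rfl⟩
  · obtain ⟨a, b⟩ := q
    rintro ⟨⟨hq, h₁⟩, h₂⟩
    obtain ⟨x, a, y, b, rfl, rfl⟩ := exists_eq_cons_succ_cons_succ hq
    simp only [Set.mem_ofPred_eq, List.head?_cons, Option.some.injEq, Nat.add_eq_right] at h₁ h₂
    subst h₂
    obtain ⟨x, rfl⟩ := Nat.exists_eq_succ_of_ne_zero h₁
    exact ⟨((x + 1) :: a, b), cons_add_two_cons_one_mem_iff.mp hq, rfl⟩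

theorem image_modifyHead_modifyHead (m t d : ℕ) :
    Prod.map (List.modifyHead (· + 1)) (List.modifyHead (· + 1)) '' ballotPairs m (t + 1) d =
      (ballotPairs (m + 1) (t + 1) d \ {q | q.1.head? = some 1}) \ {q | q.2.head? = some 1} := by
  ext q
  constructor
  · rintro ⟨⟨a, b⟩, h, rfl⟩
    obtain ⟨x, a, y, b, rfl, rfl⟩ := exists_eq_cons_succ_cons_succ h
    exact ⟨⟨cons_add_two_cons_add_two_mem_iff.mpr h, by simp⟩, by simp⟩
  · obtain ⟨a, b⟩ := q
    rintro ⟨⟨hq, h₁⟩, h₂⟩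
    obtain ⟨x, a, y, b, rfl, rfl⟩ := exists_eq_cons_succ_cons_succ hq
    simp only [Set.mem_ofPred_eq, List.head?_cons, Option.some.injEq, Nat.add_eq_right] at h₁ h₂
    obtain ⟨x, rfl⟩ := Nat.exists_eq_succ_of_ne_zero h₁
    obtain ⟨y, rfl⟩ := Nat.exists_eq_succ_of_ne_zero h₂
    exact ⟨((x + 1) :: a, (y + 1) :: b), cons_add_two_cons_add_two_mem_iff.mp hq, rfl⟩

theorem ncard_zero (t d : ℕ) : (ballotPairs 0 t d).ncard = if t + d = 0 then 1 else 0 := by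
  have hmem : ∀ q, q ∈ ballotPairs 0 t d ↔ q = ([], []) ∧ t + d = 0 := by
    rintro ⟨a, b⟩
    constructor
    · rintro ⟨hl, hl', ha, -, hs, -⟩
      obtain _ | ⟨x, a⟩ := a
      · simp only [List.length_nil] at hl hl'
        obtain rfl : b = [] := List.length_eq_zero_iff.mp (by omega)
        exact ⟨rfl, hl.symm⟩
      · exact absurd (by simp at hs; omega) (List.ne_of_not_mem_cons ha)
    · rintro ⟨h, ht⟩
      obtain ⟨rfl, rfl⟩ := Prod.mk.inj h
      exact ⟨by simp [ht], by simp; omega, by simp, by simp, rfl, rfl, by simp⟩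
  split_ifs with h
  · rw [Set.ncard_eq_one]
    exact ⟨([], []), Set.ext fun q => by simp [hmem, h]⟩
  · rw [Set.ncard_eq_zero (finite 0 t d)]
    exact Set.eq_empty_of_forall_notMem fun q hq => h ((hmem q).mp hq).2

theorem ncard_succ_zero (m d : ℕ) : (ballotPairs (m + 1) 0 d).ncard = 0 := by
  rw [Set.ncard_eq_zero (finite _ _ _)]
  refine Set.eq_empty_of_forall_notMem ?_
  rintro ⟨a, b⟩ ⟨-, hb, -, -, -, hsum, -⟩
  obtain rfl : b = [] := List.length_eq_zero_iff.mp hb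
  simp at hsum

theorem ncard_succ_succ (m t d : ℕ) :
    (ballotPairs (m + 1) (t + 1) d).ncard =
      (ballotPairs m t d).ncard + (if d = 0 then 0 else (ballotPairs m (t + 1) (d - 1)).ncard) +
        ((ballotPairs m t (d + 1)).ncard + (ballotPairs m (t + 1) d).ncard) := by
  have hS := finite (m + 1) (t + 1) d
  have inc_inj : Function.Injective (List.modifyHead (· + 1)) :=
    List.modifyHead_injective (add_left_injective 1)
  have hcons : Function.Injective fun q : List ℕ × List ℕ => (1 :: q.1, 1 :: q.2) :=
    fun _ _ h => by simpa [Prod.ext_iff] using h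
  have hconsInc : Function.Injective fun q : List ℕ × List ℕ =>
      (1 :: q.1, q.2.modifyHead (· + 1)) :=
    fun _ _ h => by simpa [Prod.ext_iff, inc_inj.eq_iff] using h
  have hincCons : Function.Injective fun q : List ℕ × List ℕ =>
      (q.1.modifyHead (· + 1), 1 :: q.2) :=
    fun _ _ h => by simpa [Prod.ext_iff, inc_inj.eq_iff] using h
  rw [← Set.ncard_inter_add_ncard_sdiff_eq_ncard _ {q | q.1.head? = some 1} hS,
    ← Set.ncard_inter_add_ncard_sdiff_eq_ncard _ {q | q.2.head? = some 1} (hS.inter_of_left _),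
    ← Set.ncard_inter_add_ncard_sdiff_eq_ncard _ {q | q.2.head? = some 1} hS.sdiff,
    ← image_cons_one_cons_one, Set.ncard_image_of_injective _ hcons,
    ← image_modifyHead_cons_one, Set.ncard_image_of_injective _ hincCons,
    ← image_modifyHead_modifyHead, Set.ncard_image_of_injective _ (inc_inj.prodMap inc_inj)]
  congr 2
  rcases d with _ | d
  · rw [succ_succ_zero_inter_sdiff_eq_empty, Set.ncard_empty, if_pos rfl]
  · rw [← image_cons_one_modifyHead, Set.ncard_image_of_injective _ hconsInc,
      if_neg d.succ_ne_zero, Nat.add_sub_cancel]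

end ballotPairs

def intChoose (n : ℕ) (k : ℤ) : ℤ := if 0 ≤ k then n.choose k.toNat else 0

@[simp] theorem intChoose_natCast (n k : ℕ) : intChoose n k = n.choose k := by simp [intChoose]

theorem intChoose_of_neg {n : ℕ} {k : ℤ} (hk : k < 0) : intChoose n k = 0 := by
  simp [intChoose, not_le.mpr hk]

theorem intChoose_succ (n : ℕ) (k : ℤ) :
    intChoose (n + 1) k = intChoose n (k - 1) + intChoose n k := by
  rcases lt_or_ge k 0 with hk | hk
  · simp [intChoose_of_neg hk, intChoose_of_neg (show k - 1 < 0 by omega)]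
  lift k to ℕ using hk
  cases k with
  | zero => simp [intChoose]
  | succ k => simp [intChoose, Nat.choose_succ_succ', show (0 : ℤ) ≤ k + 1 by omega]

def ballotNumber (n : ℕ) (t d : ℤ) : ℤ :=
  intChoose n (t + d - 1) * intChoose n (t - 1) - intChoose n (t + d) * intChoose n (t - 2)

theorem ballotNumber_succ_succ (n : ℕ) (t d : ℤ) :
    ballotNumber (n + 1) (t + 1) d = ballotNumber n t d + ballotNumber n (t + 1) (d - 1) +
      (ballotNumber n t (d + 1) + ballotNumber n (t + 1) d) := by
  simp only [ballotNumber, intChoose_succ]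
  ring_nf

theorem ballotNumber_add_one_neg_one (n : ℕ) (t : ℤ) : ballotNumber n (t + 1) (-1) = 0 := by
  simp only [ballotNumber]
  ring_nf

theorem ballotNumber_zero_succ (t d : ℕ) :
    ballotNumber 0 (t + 1) d = if t + d = 0 then 1 else 0 := by
  have h₁ : (t + 1 + d - 1 : ℤ) = (t + d : ℕ) := by push_cast; ring
  have h₂ : (t + 1 + d : ℤ) = (t + d + 1 : ℕ) := by push_cast; ring
  rw [ballotNumber, h₁, h₂, add_sub_cancel_right, intChoose_natCast, intChoose_natCast,
    intChoose_natCast, Nat.choose_zero_succ]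
  cases t <;> cases d <;> simp

theorem ballotPairs.ncard_succ (n t d : ℕ) :
    ((ballotPairs (n + 1) t d).ncard : ℤ) = ballotNumber n t d := by
  induction n generalizing t d with
  | zero =>
    obtain _ | t := t
    · simp [ncard_succ_zero, ballotNumber, intChoose_of_neg]
    rw [ncard_succ_succ, Nat.cast_succ, ballotNumber_zero_succ]
    simp [ncard_zero]
  | succ n ih =>
    obtain _ | t := t
    · simp [ncard_succ_zero, ballotNumber, intChoose_of_neg]
    rw [ncard_succ_succ]
    push_cast
    simp only [ih, Nat.cast_succ, ballotNumber_succ_succ]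
    split_ifs with hd
    · simp [hd, ballotNumber_add_one_neg_one]
    · rw [Nat.cast_sub (Nat.one_le_iff_ne_zero.mpr hd)]
      simp

theorem setOf_isDyck_flaws_peaks_eq_image {m : ℕ} (hm : m ≠ 0) (k : ℕ) :
    {l | IsDyck m l ∧ flaws l = m ∧ peaks l = k} =
      (fun q => ofRuns q.1 q.2) '' ballotPairs m (k + 1) 0 := by
  ext l
  constructor
  · rintro ⟨⟨hlen, htrue⟩, hflaws, hpeaks⟩
    have hbelow : StaysBelow 0 l := flaws_eq_count_true_iff.mp (by rw [hflaws, htrue])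
    have hfalse : l.count false = m := by
      have := List.count_true_add_count_false l
      omega
    obtain ⟨a, b, ha0, hb0, hab, rfl⟩ :=
      exists_eq_ofRuns_of_staysBelow hbelow (by simp [height, htrue, hfalse])
    have ha : a ≠ [] := by
      rintro rfl
      simp only [ofRuns_nil_left, List.length_nil] at hlen
      omega
    rw [peaks_ofRuns ha0 hb0 hab] at hpeaks
    rw [count_ofRuns true hab, if_pos rfl] at htrue
    rw [count_ofRuns false hab, if_neg Bool.false_ne_true] at hfalse
    have hpos := List.length_pos_iff.mpr ha
    refine ⟨(a, b), ⟨show a.length = k + 1 + 0 by omega, show b.length = k + 1 by omega,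
      ha0, hb0, hfalse, htrue, fun i => ?_⟩, rfl⟩
    have := (staysBelow_ofRuns_iff hab).mp hbelow i
    rw [zero_add] at this
    exact_mod_cast this
  · rintro ⟨⟨a, b⟩, ⟨ha, hb, ha0, hb0, hsa, hsb, hdom⟩, rfl⟩
    have hab : a.length = b.length := by rw [ha, hb, add_zero]
    have htrue : (ofRuns a b).count true = m := by rw [count_ofRuns true hab, if_pos rfl, hsb]
    refine ⟨⟨?_, htrue⟩, ?_, ?_⟩
    · rw [← List.count_true_add_count_false, htrue, count_ofRuns false hab]
      simp [hsa, two_mul]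
    · rw [← htrue, flaws_eq_count_true_iff, staysBelow_ofRuns_iff hab]
      exact fun i => by rw [zero_add]; exact_mod_cast hdom i
    · rw [peaks_ofRuns ha0 hb0 hab, ha]; rfl

theorem p_eq_ncard_ballotPairs {m : ℕ} (hm : m ≠ 0) (k : ℕ) :
    p m m k = (ballotPairs m (k + 1) 0).ncard := by
  have hp : p m m k = {l | IsDyck m l ∧ flaws l = m ∧ peaks l = k}.ncard := Nat.card_coe_set_eq _
  rw [hp, setOf_isDyck_flaws_peaks_eq_image hm, Set.InjOn.ncard_image]
  rintro ⟨a, b⟩ ⟨ha, hb, ha0, hb0, -⟩ ⟨a', b'⟩ ⟨ha', hb', ha0', hb0', -⟩ h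
  obtain ⟨rfl, rfl⟩ := ofRuns_inj ha0 hb0 ha0' hb0' (ha.trans hb.symm) (ha'.trans hb'.symm) h
  rfl

theorem succ_mul_choose_succ_add_mul_choose (n k : ℕ) :
    (k + 1) * n.choose (k + 1) + k * n.choose k = n * n.choose k := by
  rcases le_or_gt k n with hk | hk
  · have := Nat.choose_succ_right_eq n k
    calc (k + 1) * n.choose (k + 1) + k * n.choose k = n.choose k * (n - k) + k * n.choose k := by
          rw [mul_comm, this]
      _ = n * n.choose k := by rw [← Nat.sub_add_cancel hk]; simp; ring
  · simp [Nat.choose_eq_zero_of_lt hk, Nat.choose_eq_zero_of_lt (hk.trans (Nat.lt_succ_self k))]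

theorem succ_mul_ballotNumber_zero (n k : ℕ) :
    (k + 1) * ballotNumber n (k + 1) 0 = n.choose k * (n + 1).choose k := by
  rcases k with _ | k
  · simp [ballotNumber, intChoose]
  have r₁ : ((k + 1) * n.choose (k + 1) + k * n.choose k : ℤ) = n * n.choose k := by
    exact_mod_cast succ_mul_choose_succ_add_mul_choose n k
  have r₂ : ((k + 2) * n.choose (k + 2) + (k + 1) * n.choose (k + 1) : ℤ) =
      n * n.choose (k + 1) := by
    exact_mod_cast succ_mul_choose_succ_add_mul_choose n (k + 1)
  have e₁ : ((k + 1 : ℕ) + 1 + 0 - 1 : ℤ) = (k + 1 : ℕ) := by push_cast; ring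
  have e₂ : ((k + 1 : ℕ) + 1 - 2 : ℤ) = (k : ℕ) := by push_cast; ring
  have e₃ : ((k + 1 : ℕ) + 1 + 0 : ℤ) = (k + 2 : ℕ) := by push_cast; ring
  rw [ballotNumber, e₁, add_sub_cancel_right, e₂, e₃, intChoose_natCast, intChoose_natCast,
    intChoose_natCast, Nat.choose_succ_succ']
  push_cast
  linear_combination (n.choose (k + 1) : ℤ) * r₁ - (n.choose k : ℤ) * r₂

theorem all_flaws_peaks_general (m k : ℕ) (hm : 1 ≤ m) :
    (k + 1) * p m m k = Nat.choose (m - 1) k * Nat.choose m k := by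
  obtain ⟨n, rfl⟩ : ∃ n, m = n + 1 := ⟨m - 1, by omega⟩
  rw [p_eq_ncard_ballotPairs n.succ_ne_zero, Nat.add_sub_cancel]
  have hcount := ballotPairs.ncard_succ n (k + 1) 0
  push_cast at hcount
  have h := succ_mul_ballotNumber_zero n k
  rw [← hcount] at h
  exact_mod_cast h

/-- For all-flawed Dyck paths: `(k+1) p_{m,m,k} = C(m-1,k) C(m,k)`. -/
theorem all_flaws_peaks (m k : ℕ) (hm : 1 ≤ m) (hk : k ≤ m - 1) :
    (k + 1) * p m m k = Nat.choose (m - 1) k * Nat.choose m k :=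
  all_flaws_peaks_general m k hm
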